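/- Let W be a compact open subgroup of G which is tidy for the automorphism α, let w ∈ G, and suppose that αᵐ(w) ∈ W and αⁿ(w) ∈ W for integers m < n. Then αᵏ(w) ∈ W for every integer k with m ≤ k ≤ n. -/

import Mathlib

/-!
Write `αᵐ(w) = u v` with `u ∈ W₊` and `v ∈ W₋` (T1). Then `αᵖ(u)`, `p = n - m`, lies in
`W ∩ W₊₊`, and for tidy `W` this is `W₊`; so `αʲ(u) ∈ W` for `0 ≤ j ≤ p`, while `αʲ(v) ∈ W`
for all `j ≥ 0`. The inclusion `W ∩ W₊₊ ⊆ W₊` rests on T2: the compact group `W ∩ W₊₊` is the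
increasing union of the closed subgroups `W ∩ αᴺ(W₊)`, so by Baire it lies in one of them; then
`αᴺ` carries `W₊₊ ∩ W₋` into `αᴺ(W₊)`, and `W ∩ W₊₊ = W₊ (W₊₊ ∩ W₋)` by T1.
-/

open scoped Pointwise

universe u

variable {G : Type u} [Group G] [TopologicalSpace G] [IsTopologicalGroup G]

/-- `V_{α+} = ⋂_{n ≥ 0} αⁿ(V)`. -/
def plusSet (α : MulAut G) (V : Set G) : Set G := ⋂ n : ℕ, ⇑(α ^ n) '' V

/-- `V_{α−} = ⋂_{n ≥ 0} α⁻ⁿ(V)`. -/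
def minusSet (α : MulAut G) (V : Set G) : Set G := ⋂ n : ℕ, ⇑(α⁻¹ ^ n) '' V

/-- `V_{α++} = ⋃_{n ≥ 0} αⁿ(V_{α+})`. -/
def plusplusSet (α : MulAut G) (V : Set G) : Set G := ⋃ n : ℕ, ⇑(α ^ n) '' plusSet α V

/-- `V` is tidy for `α`: condition T1(α), `V = V_{α+}·V_{α−}`, together with
condition T2(α), `V_{α++}` is closed. -/
def IsTidy (α : MulAut G) (V : Set G) : Prop :=
  V = plusSet α V * minusSet α V ∧ IsClosed (plusplusSet α V)

/-- `U` is invariably tidy for `𝔞`: for every `γ` in the group generated by `𝔞`,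
`γ(U)` is tidy for every `a ∈ 𝔞`. -/
def InvariablyTidy (𝔞 : Set (MulAut G)) (U : Set G) : Prop :=
  ∀ γ ∈ Subgroup.closure 𝔞, ∀ a ∈ 𝔞, IsTidy a (⇑γ '' U)

/-- `U_𝔞 = ⋂_{a ∈ 𝔞} U_{a+}` (set version). -/
def interSet (𝔞 : Set (MulAut G)) (U : Set G) : Set G := ⋂ a ∈ 𝔞, plusSet a U

/-- `H_{α+}` as a subgroup. -/
def plusSub (α : MulAut G) (H : Subgroup G) : Subgroup G :=
  ⨅ n : ℕ, H.map (MulEquiv.toMonoidHom (α ^ n))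

/-- `H_𝔞 = ⋂_{a ∈ 𝔞} H_{a+}` as a subgroup. -/
def interSub (𝔞 : Set (MulAut G)) (H : Subgroup G) : Subgroup G := ⨅ a ∈ 𝔞, plusSub a H

/-- The scale of `α` : the minimum of `[α(V) : α(V) ∩ V]` over compact open subgroups `V`. -/
noncomputable def scale (α : MulAut G) : ℕ :=
  sInf {n : ℕ | ∃ V : Subgroup G, IsCompact (V : Set G) ∧ IsOpen (V : Set G) ∧
    n = V.relIndex (V.map (MulEquiv.toMonoidHom α))}

namespace MulAut

variable {M : Type*} [Mul M]

lemma mem_image_iff {β : MulAut M} {V : Set M} {x : M} : x ∈ ⇑β '' V ↔ β⁻¹ x ∈ V :=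
  Set.mem_image_equiv (f := β.toEquiv)

lemma continuous_pow [TopologicalSpace M] {β : MulAut M} (hβ : Continuous ⇑β) (n : ℕ) :
    Continuous ⇑(β ^ n) := by
  change Continuous ⇑(toPerm M (β ^ n))
  rw [map_pow, Equiv.Perm.coe_pow]
  exact hβ.iterate n

lemma isClosed_image_pow [TopologicalSpace M] {β : MulAut M} (hβ' : Continuous ⇑β⁻¹)
    {V : Set M} (hV : IsClosed V) (n : ℕ) : IsClosed (⇑(β ^ n) '' V) := by
  have h : ⇑(β ^ n) '' V = ⇑(β⁻¹ ^ n) ⁻¹' V := by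
    ext x
    rw [mem_image_iff, inv_pow]
    rfl
  exact h ▸ hV.preimage (continuous_pow hβ' n)

lemma inv_pow_apply_pow_apply (β : MulAut M) {d p : ℕ} (hdp : d ≤ p) (x : M) :
    (β⁻¹ ^ (p - d)) ((β ^ p) x) = (β ^ d) x := by
  rw [← Nat.sub_add_cancel hdp, pow_add, Nat.add_sub_cancel, inv_pow, mul_apply, inv_apply_self]

end MulAut

namespace Subgroup

/-- By Baire one `K n` is open in `H`; then compactness of `H` bounds the cover. -/
lemma exists_le_of_isCompact_of_subset_iUnion {H : Subgroup G} (hH : IsCompact (H : Set G))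
    {K : ℕ → Subgroup G} (hK : Monotone K) (hKc : ∀ n, IsClosed (K n : Set G))
    (hHK : (H : Set G) ⊆ ⋃ n, (K n : Set G)) : ∃ n, H ≤ K n := by
  have : CompactSpace H := isCompact_iff_compactSpace.mp hH
  let L : ℕ → Subgroup H := fun n => (K n).subgroupOf H
  have hL : Monotone L := fun i j hij => subgroupOf_mono H (hK hij)
  have hLcover : ∀ x : H, x ∈ ⋃ n, (L n : Set H) := fun x =>
    let ⟨i, hi⟩ := Set.mem_iUnion.mp (hHK x.2)
    Set.mem_iUnion.mpr ⟨i, hi⟩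
  obtain ⟨N, x, hx⟩ := nonempty_interior_of_iUnion_of_closed
    (fun n => (hKc n).preimage continuous_subtype_val) (Set.eq_univ_of_forall hLcover)
  have hLo : IsOpen (L N : Set H) := (L N).isOpen_of_mem_nhds (mem_interior_iff_mem_nhds.mp hx)
  obtain ⟨n, hn⟩ := isCompact_univ.elim_directed_cover (fun n => (L (max N n) : Set H))
    (fun n => isOpen_mono (hL (le_max_left N n)) hLo)
    (fun x _ => by
      obtain ⟨i, hi⟩ := Set.mem_iUnion.mp (hLcover x)
      exact Set.mem_iUnion.mpr ⟨i, hL (le_max_right N i) hi⟩)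
    (fun i j => ⟨max i j, hL (max_le_max_left N (le_max_left i j)),
      hL (max_le_max_left N (le_max_right i j))⟩)
  exact ⟨max N n, fun x hx => hn (Set.mem_univ ⟨x, hx⟩)⟩

end Subgroup

section PlusMinus

variable {M : Type*} [Group M] {α : MulAut M}

lemma mem_plusSet {V : Set M} {x : M} : x ∈ plusSet α V ↔ ∀ j : ℕ, (α⁻¹ ^ j) x ∈ V := by
  simp only [plusSet, Set.mem_iInter, MulAut.mem_image_iff, inv_pow]

lemma mem_minusSet {V : Set M} {x : M} : x ∈ minusSet α V ↔ ∀ j : ℕ, (α ^ j) x ∈ V := by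
  simp only [minusSet, Set.mem_iInter, MulAut.mem_image_iff, inv_pow, inv_inv]

lemma mem_plusplusSet {V : Set M} {x : M} :
    x ∈ plusplusSet α V ↔ ∃ j : ℕ, (α⁻¹ ^ j) x ∈ plusSet α V := by
  simp only [plusplusSet, Set.mem_iUnion, MulAut.mem_image_iff, inv_pow]

lemma inv_pow_apply_mem_plusSet {V : Set M} {x : M} (hx : x ∈ plusSet α V) (i : ℕ) :
    (α⁻¹ ^ i) x ∈ plusSet α V :=
  mem_plusSet.mpr fun j => by
    rw [← MulAut.mul_apply, ← pow_add]
    exact mem_plusSet.mp hx _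

lemma pow_apply_mem_plusplusSet {V : Set M} {x : M} (hx : x ∈ plusplusSet α V) (j : ℕ) :
    (α ^ j) x ∈ plusplusSet α V := by
  obtain ⟨i, hi⟩ := mem_plusplusSet.mp hx
  refine mem_plusplusSet.mpr ⟨i + j, ?_⟩
  rwa [pow_add, MulAut.mul_apply, inv_pow α j, MulAut.inv_apply_self]

lemma plusSet_subset_plusplusSet {V : Set M} : plusSet α V ⊆ plusplusSet α V :=
  fun x hx => mem_plusplusSet.mpr ⟨0, by simpa using hx⟩

lemma monotone_image_pow_plusSet (α : MulAut M) (V : Set M) :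
    Monotone fun n : ℕ => ⇑(α ^ n) '' plusSet α V := by
  intro i j hij x hx
  simp only [MulAut.mem_image_iff, ← inv_pow] at hx ⊢
  rw [← Nat.sub_add_cancel hij, pow_add, MulAut.mul_apply]
  exact inv_pow_apply_mem_plusSet hx _

lemma coe_plusSub (α : MulAut M) (H : Subgroup M) : (plusSub α H : Set M) = plusSet α H := by
  simp [plusSub, plusSet]

lemma coe_map_pow_plusSub (α : MulAut M) (H : Subgroup M) (n : ℕ) :
    ((plusSub α H).map (α ^ n).toMonoidHom : Set M) = ⇑(α ^ n) '' plusSet α H := by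
  rw [Subgroup.coe_map, coe_plusSub]
  rfl

lemma monotone_map_pow_plusSub (α : MulAut M) (H : Subgroup M) :
    Monotone fun n : ℕ => (plusSub α H).map (α ^ n).toMonoidHom := fun i j hij => by
  rw [← SetLike.coe_subset_coe, coe_map_pow_plusSub, coe_map_pow_plusSub]
  exact monotone_image_pow_plusSet α H hij

def plusplusSub (α : MulAut M) (H : Subgroup M) : Subgroup M :=
  ⨆ n : ℕ, (plusSub α H).map (α ^ n).toMonoidHom

lemma coe_plusplusSub (α : MulAut M) (H : Subgroup M) :
    (plusplusSub α H : Set M) = plusplusSet α H := by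
  rw [plusplusSub, Subgroup.coe_iSup_of_directed (monotone_map_pow_plusSub α H).directed_le]
  simp only [coe_map_pow_plusSub, plusplusSet]

lemma plusSub_le_plusplusSub (α : MulAut M) (H : Subgroup M) :
    plusSub α H ≤ plusplusSub α H := by
  rw [← SetLike.coe_subset_coe, coe_plusSub, coe_plusplusSub]
  exact plusSet_subset_plusplusSet

/-- `αᴺ` maps `W₊₊ ∩ W₋` into `W ∩ W₊₊`. -/
lemma plusplusSet_inter_minusSet_subset {W : Subgroup M} {N : ℕ}
    (hN : (W : Set M) ∩ plusplusSet α W ⊆ ⇑(α ^ N) '' plusSet α W) :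
    plusplusSet α W ∩ minusSet α W ⊆ plusSet α W := fun z ⟨hzpp, hzm⟩ => by
  have h := hN ⟨mem_minusSet.mp hzm N, pow_apply_mem_plusplusSet hzpp N⟩
  rwa [MulAut.mem_image_iff, MulAut.inv_apply_self] at h

end PlusMinus

section Tidy

variable {α : MulAut G} {W : Subgroup G}

lemma exists_inter_plusplusSet_subset (hα' : Continuous ⇑α⁻¹) (hWc : IsCompact (W : Set G))
    (hWo : IsOpen (W : Set G)) (hpp : IsClosed (plusplusSet α W)) :
    ∃ N : ℕ, (W : Set G) ∩ plusplusSet α W ⊆ ⇑(α ^ N) '' plusSet α W := by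
  have hWcl : IsClosed (W : Set G) := W.isClosed_of_isOpen hWo
  have hP : IsClosed (plusSet α W) :=
    isClosed_iInter fun n => MulAut.isClosed_image_pow hα' hWcl n
  have hH : ((W ⊓ plusplusSub α W : Subgroup G) : Set G) = (W : Set G) ∩ plusplusSet α W := by
    rw [Subgroup.coe_inf, coe_plusplusSub]
  obtain ⟨N, hN⟩ := Subgroup.exists_le_of_isCompact_of_subset_iUnion
    (hH ▸ hWc.of_isClosed_subset (hWcl.inter hpp) Set.inter_subset_left)
    (monotone_map_pow_plusSub α W)
    (fun n => by simpa only [coe_map_pow_plusSub] using MulAut.isClosed_image_pow hα' hP n)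
    (by rw [hH]; simp only [coe_map_pow_plusSub]; exact Set.inter_subset_right)
  refine ⟨N, ?_⟩
  rw [← hH, ← coe_map_pow_plusSub]
  exact hN

lemma IsTidy.inter_plusplusSet_subset (hW : IsTidy α W) (hα' : Continuous ⇑α⁻¹)
    (hWc : IsCompact (W : Set G)) (hWo : IsOpen (W : Set G)) :
    (W : Set G) ∩ plusplusSet α W ⊆ plusSet α W := by
  obtain ⟨N, hN⟩ := exists_inter_plusplusSet_subset hα' hWc hWo hW.2
  rintro y ⟨hyW, hypp⟩
  obtain ⟨u, hu, v, hv, rfl⟩ := Set.mem_mul.mp (hW.1 ▸ hyW : y ∈ plusSet α W * minusSet α W)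
  rw [← coe_plusSub] at hu ⊢
  rw [← coe_plusplusSub] at hypp
  have hvpp : v ∈ plusplusSub α W := by
    simpa using (plusplusSub α W).mul_mem
      ((plusplusSub α W).inv_mem (plusSub_le_plusplusSub α W hu)) hypp
  have hvp : v ∈ plusSub α W := by
    rw [← SetLike.mem_coe, coe_plusSub]
    exact plusplusSet_inter_minusSet_subset hN ⟨by rwa [← coe_plusplusSub], hv⟩
  exact (plusSub α W).mul_mem hu hvp

lemma IsTidy.pow_apply_mem_of_le (hW : IsTidy α W) (hα' : Continuous ⇑α⁻¹)
    (hWc : IsCompact (W : Set G)) (hWo : IsOpen (W : Set G)) {x : G} (hx : x ∈ W) {p : ℕ}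
    (hp : (α ^ p) x ∈ W) {d : ℕ} (hdp : d ≤ p) : (α ^ d) x ∈ W := by
  obtain ⟨u, hu, v, hv, rfl⟩ := Set.mem_mul.mp (hW.1 ▸ hx : x ∈ plusSet α W * minusSet α W)
  have hvW : ∀ j : ℕ, (α ^ j) v ∈ W := mem_minusSet.mp hv
  rw [map_mul] at hp ⊢
  have hpuW : (α ^ p) u ∈ W := by
    simpa using W.mul_mem hp (W.inv_mem (hvW p))
  have hpup : (α ^ p) u ∈ plusSet α W :=
    hW.inter_plusplusSet_subset hα' hWc hWo
      ⟨hpuW, pow_apply_mem_plusplusSet (plusSet_subset_plusplusSet hu) p⟩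
  have hduW : (α ^ d) u ∈ W := by
    rw [← MulAut.inv_pow_apply_pow_apply α hdp]
    exact mem_plusSet.mp hpup (p - d)
  exact W.mul_mem hduW (hvW d)

end Tidy

theorem stmt2_general
    (α : MulAut G) (hα' : Continuous ⇑(α⁻¹))
    (W : Subgroup G) (hWc : IsCompact (W : Set G)) (hWo : IsOpen (W : Set G))
    (hW : IsTidy α (W : Set G))
    (w : G) (m n : ℤ)
    (hm : (α ^ m) w ∈ W) (hn : (α ^ n) w ∈ W) :
    ∀ k : ℤ, m ≤ k → k ≤ n → (α ^ k) w ∈ W := by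
  intro k hmk hkn
  obtain ⟨d, rfl⟩ := Int.le.dest hmk
  obtain ⟨p, rfl⟩ := Int.le.dest (hmk.trans hkn)
  have shift : ∀ j : ℕ, (α ^ (m + j)) w = (α ^ j) ((α ^ m) w) := fun j => by
    rw [add_comm, zpow_add, zpow_natCast, MulAut.mul_apply]
  rw [shift] at hn ⊢
  exact hW.pow_apply_mem_of_le hα' hWc hWo hm hn (by omega)

theorem stmt2 [LocallyCompactSpace G] [TotallyDisconnectedSpace G] [T2Space G]
    (α : MulAut G) (hα : Continuous ⇑α) (hα' : Continuous ⇑(α⁻¹))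
    (W : Subgroup G) (hWc : IsCompact (W : Set G)) (hWo : IsOpen (W : Set G))
    (hW : IsTidy α (W : Set G))
    (w : G) (m n : ℤ) (hmn : m < n)
    (hm : (α ^ m) w ∈ W) (hn : (α ^ n) w ∈ W) :
    ∀ k : ℤ, m ≤ k → k ≤ n → (α ^ k) w ∈ W :=
  stmt2_general α hα' W hWc hWo hW w m n hm hn
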